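/- arXiv:2502.03350 — 7 statements merged into one kernel-verified Lean document; each statement's English description precedes it below -/
import Mathlib

section
/- Let P ≥ 1 be an integer and m ∈ (-1,1) a real number. Let M̄ ∈ ℝ^{P×P} be the strictly upper-triangular matrix with M̄_{ij} = m for i < j and 0 otherwise. Then I + M̄ is invertible and its inverse has entries [(I + M̄)^{-1}]_{ij} = δ_{ij} - m·[j > i]·(1-m)^{j-i-1}, where [j > i] equals 1 if j > i and 0 otherwise, and δ_{ij} is the Kronecker delta. -/
/-!
Write `B` for the claimed inverse. Column `j` of `B` is the backward difference of
`k ↦ (1 - m) ^ (j - k)` (cut off to `0` for `k > j`), so the sum of the entries of column `j`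
below row `i` telescopes to `[i < j] (1 - m) ^ (j - i - 1)`. Multiplied by `m`, this is row `i`
of `M̄ B`, and it equals the entry of `I - B`. Hence `M̄ B = I - B`, i.e. `(I + M̄) B = I`.
-/

open Matrix BigOperators

/-- `M̄`: the strictly upper-triangular matrix whose entries above the diagonal all equal `m`. -/
noncomputable def Mbar (P : ℕ) (m : ℝ) : Matrix (Fin P) (Fin P) ℝ :=
  Matrix.of fun i j => if (i : ℕ) < (j : ℕ) then m else 0

section

variable {R : Type*} [CommRing R] (m : R)

def mbarInvEntry (k j : ℕ) : R :=
  (if k = j then 1 else 0) - m * (if k < j then 1 else 0) * (1 - m) ^ (j - k - 1)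

def mbarInvTail (j k : ℕ) : R :=
  if k ≤ j then (1 - m) ^ (j - k) else 0

lemma mbarInvEntry_eq_mbarInvTail_sub (k j : ℕ) :
    mbarInvEntry m k j = mbarInvTail m j k - mbarInvTail m j (k + 1) := by
  unfold mbarInvEntry mbarInvTail
  rcases lt_trichotomy k j with hkj | rfl | hjk
  · obtain ⟨d, rfl⟩ : ∃ d, j = k + 1 + d := ⟨j - k - 1, by omega⟩
    rw [if_neg hkj.ne, if_pos hkj, if_pos hkj.le, if_pos (by omega),
      show k + 1 + d - k - 1 = d by omega, show k + 1 + d - k = d + 1 by omega,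
      show k + 1 + d - (k + 1) = d by omega, pow_succ]
    ring
  · simp
  · simp [hjk.ne', hjk.not_gt, hjk.not_ge, (hjk.trans (Nat.lt_succ_self k)).not_ge]

lemma sum_Ico_mbarInvEntry {a b j : ℕ} (hab : a ≤ b) (hjb : j < b) :
    ∑ k ∈ Finset.Ico a b, mbarInvEntry m k j = mbarInvTail m j a := by
  have htop : mbarInvTail m j b = 0 := if_neg hjb.not_ge
  simp only [mbarInvEntry_eq_mbarInvTail_sub]
  calc ∑ k ∈ Finset.Ico a b, (mbarInvTail m j k - mbarInvTail m j (k + 1))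
      = -∑ k ∈ Finset.Ico a b, (mbarInvTail m j (k + 1) - mbarInvTail m j k) := by
        simp only [← Finset.sum_neg_distrib, neg_sub]
    _ = mbarInvTail m j a := by rw [Finset.sum_Ico_sub _ hab, htop, zero_sub, neg_neg]

lemma sum_range_strictUpper_mul_mbarInvEntry {P i j : ℕ} (hi : i < P) (hj : j < P) :
    ∑ k ∈ Finset.range P, (if i < k then m else 0) * mbarInvEntry m k j
      = (if i = j then 1 else 0) - mbarInvEntry m i j := by
  have hrow : ∑ k ∈ Finset.range P, (if i < k then m else 0) * mbarInvEntry m k j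
      = m * ∑ k ∈ Finset.Ico (i + 1) P, mbarInvEntry m k j := by
    have hfilter : (Finset.range P).filter (i < ·) = Finset.Ico (i + 1) P := by
      ext k
      simp only [Finset.mem_filter, Finset.mem_range, Finset.mem_Ico]
      omega
    simp only [ite_mul, zero_mul]
    rw [← Finset.sum_filter, hfilter, Finset.mul_sum]
  rw [hrow, sum_Ico_mbarInvEntry m hi hj, mbarInvTail, mbarInvEntry, Nat.sub_sub]
  split_ifs <;> first | omega | ring

end

noncomputable def MbarInv (P : ℕ) (m : ℝ) : Matrix (Fin P) (Fin P) ℝ :=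
  Matrix.of fun i j => mbarInvEntry m i j

theorem Mbar_mul_MbarInv (P : ℕ) (m : ℝ) : Mbar P m * MbarInv P m = 1 - MbarInv P m := by
  ext i j
  rw [mul_apply, Matrix.sub_apply, one_apply]
  simp only [← Fin.val_inj]
  exact (Fin.sum_univ_eq_sum_range
    (fun k => (if (i : ℕ) < k then m else 0) * mbarInvEntry m k j) P).trans
    (sum_range_strictUpper_mul_mbarInvEntry m i.isLt j.isLt)

theorem one_add_Mbar_mul_MbarInv (P : ℕ) (m : ℝ) : (1 + Mbar P m) * MbarInv P m = 1 := by
  rw [add_mul, one_mul, Mbar_mul_MbarInv, add_sub_cancel]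

theorem inverse_of_one_add_Mbar_general
    (P : ℕ) (m : ℝ) :
    IsUnit (1 + Mbar P m) ∧
      ∀ i j : Fin P,
        (1 + Mbar P m)⁻¹ i j =
          (if i = j then (1 : ℝ) else 0)
            - m * (if (i : ℕ) < (j : ℕ) then (1 : ℝ) else 0) *
              (1 - m) ^ ((j : ℕ) - (i : ℕ) - 1) := by
  have h := one_add_Mbar_mul_MbarInv P m
  refine ⟨IsUnit.of_mul_eq_one _ h, fun i j => ?_⟩
  rw [inv_eq_right_inv h, MbarInv, of_apply, mbarInvEntry]
  simp only [Fin.val_inj]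

/-- Lemma 1 of the paper: `I + M̄` is invertible with
`[(I + M̄)⁻¹]_{ij} = δ_{ij} - m [j > i] (1-m)^{j-i-1}`. -/
theorem inverse_of_one_add_Mbar
    (P : ℕ) (hP : 1 ≤ P) (m : ℝ) (hm : -1 < m) (hm' : m < 1) :
    IsUnit (1 + Mbar P m) ∧
      ∀ i j : Fin P,
        (1 + Mbar P m)⁻¹ i j =
          (if i = j then (1 : ℝ) else 0)
            - m * (if (i : ℕ) < (j : ℕ) then (1 : ℝ) else 0) *
              (1 - m) ^ ((j : ℕ) - (i : ℕ) - 1) :=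
  inverse_of_one_add_Mbar_general P m
end

section
/- Let P ≥ 1 be an integer and m ∈ (-1,1) a real number. Let M̄ ∈ ℝ^{P×P} be the strictly upper-triangular matrix with M̄_{ij} = m for i < j and 0 otherwise. Then for all 1 ≤ i, j ≤ P, [M̄ (I + M̄)^{-T}]_{ij} = m(1-m)^{P-j} - m·[j ≤ i]·(1-m)^{i-j}, where (I + M̄)^{-T} denotes the transpose of the inverse of I + M̄ and [j ≤ i] equals 1 if j ≤ i and 0 otherwise. -/
open Matrix BigOperators

namespace MbarAux

/-- Entries of the inverse of `1 + Mbar`. -/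
noncomputable def f (m : ℝ) (j k : ℕ) : ℝ :=
  if j = k then 1 else if j < k then -m * (1-m)^(k-j-1) else 0

lemma f_eq_zero {m : ℝ} {j k : ℕ} (h : k < j) : f m j k = 0 := by
  unfold f; rw [if_neg (by omega), if_neg (by omega)]

lemma L1 (m : ℝ) (j a : ℕ) (hja : j < a) : ∀ n, a ≤ n →
    ∑ k ∈ Finset.Ico a n, f m j k = (1-m)^(n-1-j) - (1-m)^(a-1-j) := by
  intro n hn
  induction n, hn using Nat.le_induction with
  | base => simp
  | succ n hn ih =>
    have hj : j < n := lt_of_lt_of_le hja hn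
    rw [Finset.sum_Ico_succ_top hn, ih]
    have hfn : f m j n = -m * (1-m)^(n-1-j) := by
      unfold f
      rw [if_neg (by omega), if_pos hj, show n - j - 1 = n - 1 - j from by omega]
    rw [hfn, show n + 1 - 1 - j = (n - 1 - j) + 1 from by omega, pow_succ]
    ring

lemma L2 (m : ℝ) (j n : ℕ) (hjn : j < n) :
    ∑ k ∈ Finset.Ico j n, f m j k = (1-m)^(n-1-j) := by
  rw [Finset.sum_eq_sum_Ico_succ_bot hjn, L1 m j (j+1) (by omega) n hjn,
    show j + 1 - 1 - j = 0 from by omega]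
  simp [f]

lemma Ltail (m : ℝ) (P i j : ℕ) (hi : i < P) (hj : j < P) :
    ∑ k ∈ Finset.Ico (i+1) P, f m j k =
      (1-m)^(P-1-j) - (if j ≤ i then (1-m)^(i-j) else 0) := by
  by_cases h : j ≤ i
  · rw [if_pos h, L1 m j (i+1) (by omega) P (by omega),
      show i + 1 - 1 - j = i - j from by omega]
  · rw [if_neg h, sub_zero,
      ← Finset.sum_Ico_consecutive _ (show i+1 ≤ j from by omega) (le_of_lt hj),
      L2 m j P hj,
      Finset.sum_eq_zero (fun k hk => f_eq_zero (Finset.mem_Ico.mp hk).2), zero_add]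

noncomputable def Binv (P : ℕ) (m : ℝ) : Matrix (Fin P) (Fin P) ℝ :=
  Matrix.of fun i j => f m (i : ℕ) (j : ℕ)

lemma filter_lt (P j : ℕ) (hj : j ≤ P) :
    (Finset.range P).filter (fun k => k < j) = Finset.range j := by
  ext k; simp [Finset.mem_filter, Finset.mem_range]; omega

lemma filter_gt (P i : ℕ) :
    (Finset.range P).filter (fun k => i < k) = Finset.Ico (i+1) P := by
  ext k; simp [Finset.mem_filter, Finset.mem_range, Finset.mem_Ico]; omega

lemma Binv_mul (P : ℕ) (m : ℝ) : Binv P m * (1 + Mbar P m) = 1 := by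
  ext i j
  rw [Matrix.mul_apply]
  simp only [Matrix.add_apply, Matrix.one_apply, Mbar, Binv, Matrix.of_apply]
  have hsplit : ∀ k : Fin P,
      f m (i:ℕ) (k:ℕ) * ((if k = j then (1:ℝ) else 0) + (if (k:ℕ) < (j:ℕ) then m else 0))
        = (if k = j then f m (i:ℕ) (k:ℕ) else 0)
          + m * (if (k:ℕ) < (j:ℕ) then f m (i:ℕ) (k:ℕ) else 0) := by
    intro k; split_ifs <;> ring
  rw [Finset.sum_congr rfl (fun k _ => hsplit k), Finset.sum_add_distrib,
    Finset.sum_ite_eq' Finset.univ j (fun k => f m (i:ℕ) (k:ℕ)),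
    ← Finset.mul_sum]
  simp only [Finset.mem_univ, if_true]
  have hsum : ∑ k : Fin P, (if (k:ℕ) < (j:ℕ) then f m (i:ℕ) (k:ℕ) else 0)
      = ∑ k ∈ Finset.range (j:ℕ), f m (i:ℕ) k := by
    rw [Fin.sum_univ_eq_sum_range (fun k => if k < (j:ℕ) then f m (i:ℕ) k else 0) P,
      Finset.sum_ite, Finset.sum_const_zero, add_zero, filter_lt P (j:ℕ) (le_of_lt j.isLt)]
  rw [hsum]
  rcases lt_trichotomy (i:ℕ) (j:ℕ) with hij | hij | hij
  · -- i < j : entry should be 0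
    have hne : i ≠ j := fun h => by simp [h] at hij
    rw [if_neg hne]
    have hfij : f m (i:ℕ) (j:ℕ) = -m * (1-m)^((j:ℕ)-(i:ℕ)-1) := by
      unfold f; rw [if_neg (by omega), if_pos hij]
    have hs : ∑ k ∈ Finset.range (j:ℕ), f m (i:ℕ) k = (1-m)^((j:ℕ)-1-(i:ℕ)) := by
      rw [Finset.range_eq_Ico,
        ← Finset.sum_Ico_consecutive _ (Nat.zero_le (i:ℕ)) (le_of_lt hij),
        Finset.sum_eq_zero (fun k hk => f_eq_zero (Finset.mem_Ico.mp hk).2), zero_add,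
        L2 m (i:ℕ) (j:ℕ) hij]
    rw [hfij, hs, show (j:ℕ) - (i:ℕ) - 1 = (j:ℕ) - 1 - (i:ℕ) from by omega]
    ring
  · -- i = j
    have heq : i = j := Fin.ext hij
    rw [if_pos heq]
    have hfij : f m (i:ℕ) (j:ℕ) = 1 := by unfold f; rw [if_pos hij]
    have hs : ∑ k ∈ Finset.range (j:ℕ), f m (i:ℕ) k = 0 :=
      Finset.sum_eq_zero (fun k hk => f_eq_zero (by
        have := Finset.mem_range.mp hk; omega))
    rw [hfij, hs]; ring
  · -- j < i
    have hne : i ≠ j := fun h => by simp [h] at hij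
    rw [if_neg hne]
    have hfij : f m (i:ℕ) (j:ℕ) = 0 := f_eq_zero hij
    have hs : ∑ k ∈ Finset.range (j:ℕ), f m (i:ℕ) k = 0 :=
      Finset.sum_eq_zero (fun k hk => f_eq_zero (by
        have := Finset.mem_range.mp hk; omega))
    rw [hfij, hs]; ring

lemma inv_eq (P : ℕ) (m : ℝ) : (1 + Mbar P m)⁻¹ = Binv P m :=
  Matrix.inv_eq_left_inv (Binv_mul P m)

end MbarAux

/-- Entrywise formula for `M̄ (I + M̄)^{-T}`:
`[M̄ (I + M̄)^{-T}]_{ij} = m (1-m)^{P-j} - m [j ≤ i] (1-m)^{i-j}`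
(indices are one-based in the informal statement; here `i, j : Fin P` are zero-based,
so the one-based index of `j` is `(j : ℕ) + 1`). -/
theorem Mbar_mul_inv_transpose_entry
    (P : ℕ) (hP : 1 ≤ P) (m : ℝ) (hm : -1 < m) (hm' : m < 1) :
    ∀ i j : Fin P,
      ((Mbar P m * ((1 + Mbar P m)⁻¹)ᵀ : Matrix (Fin P) (Fin P) ℝ)) i j =
        m * (1 - m) ^ (P - ((j : ℕ) + 1))
          - m * (if (j : ℕ) ≤ (i : ℕ) then (1 : ℝ) else 0) *
            (1 - m) ^ ((i : ℕ) - (j : ℕ)) := by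
  intro i j
  rw [MbarAux.inv_eq P m, Matrix.mul_apply]
  simp only [Matrix.transpose_apply, Mbar, MbarAux.Binv, Matrix.of_apply]
  have hsplit : ∀ k : Fin P,
      (if (i:ℕ) < (k:ℕ) then m else 0) * MbarAux.f m (j:ℕ) (k:ℕ)
        = m * (if (i:ℕ) < (k:ℕ) then MbarAux.f m (j:ℕ) (k:ℕ) else 0) := by
    intro k; split_ifs <;> ring
  rw [Finset.sum_congr rfl (fun k _ => hsplit k), ← Finset.mul_sum]
  have hsum : ∑ k : Fin P, (if (i:ℕ) < (k:ℕ) then MbarAux.f m (j:ℕ) (k:ℕ) else 0)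
      = ∑ k ∈ Finset.Ico ((i:ℕ)+1) P, MbarAux.f m (j:ℕ) k := by
    rw [Fin.sum_univ_eq_sum_range (fun k => if (i:ℕ) < k then MbarAux.f m (j:ℕ) k else 0) P,
      Finset.sum_ite, Finset.sum_const_zero, add_zero, MbarAux.filter_gt P (i:ℕ)]
  rw [hsum, MbarAux.Ltail m P (i:ℕ) (j:ℕ) i.isLt j.isLt,
    show P - ((j:ℕ) + 1) = P - 1 - (j:ℕ) from by omega]
  by_cases h : (j:ℕ) ≤ (i:ℕ) <;> simp [h] <;> ring
end

section
/- Let P ≥ 1 be an integer and m ∈ (-1,1), ρₒ ∈ ℝ. Let M̄ ∈ ℝ^{P×P} be the strictly upper-triangular matrix with M̄_{ij} = m for i < j and 0 otherwise, and let C^{out} = ρₒ𝟙𝟙ᵀ + (1-ρₒ)I. Then for all 1 ≤ i, j ≤ P, [C^{out}(I + M̄)^{-1}]_{ij} = ρₒ(1-m)^{j-1} + (1-ρₒ)δ_{ij} - (1-ρₒ)m·[j > i]·(1-m)^{j-i-1}, where [j > i] equals 1 if j > i and 0 otherwise. -/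
open Matrix BigOperators

/-- `C^out = ρₒ 𝟙𝟙ᵀ + (1-ρₒ) I`. -/
noncomputable def Cout (P : ℕ) (ρo : ℝ) : Matrix (Fin P) (Fin P) ℝ :=
  Matrix.of (fun _ _ => ρo) + (1 - ρo) • (1 : Matrix (Fin P) (Fin P) ℝ)

/-! Write `M̄ = m N` with `N` the all-ones strictly upper pattern, and let
`U_ij = [i < j] (1-m)^(j-i-1)`. The geometric sum `m ∑_{t<n} (1-m)^t = 1 - (1-m)^n` gives
`M̄ U = N - U`, hence `(I + M̄)(I - m U) = I`. Multiplying by `C^out = ρₒ 𝟙𝟙ᵀ + (1-ρₒ) I`,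
the rank-one part turns into the column sums of `I - m U`, which by the same geometric sum
are `(1-m)^j`. -/

theorem Fin.sum_ite_Ico_pow_reflect {R : Type*} [CommSemiring R] {P a k : ℕ} (hk : k ≤ P)
    (x : R) :
    ∑ j : Fin P, (if a ≤ (j : ℕ) ∧ (j : ℕ) < k then x ^ (k - j - 1) else 0) =
      ∑ t ∈ Finset.range (k - a), x ^ t := by
  rw [Fin.sum_univ_eq_sum_range (fun j => if a ≤ j ∧ j < k then x ^ (k - j - 1) else 0),
    ← Finset.sum_filter]
  have hfilter : (Finset.range P).filter (fun j => a ≤ j ∧ j < k) = Finset.Ico a k := by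
    ext j; simp only [Finset.mem_filter, Finset.mem_range, Finset.mem_Ico]; omega
  rw [hfilter, Finset.sum_Ico_eq_sum_range, ← Finset.sum_range_reflect]
  refine Finset.sum_congr rfl fun t ht => ?_
  rw [Finset.mem_range] at ht
  congr 1
  omega

theorem mul_geom_sum_one_sub {R : Type*} [CommRing R] (m : R) (n : ℕ) :
    m * ∑ t ∈ Finset.range n, (1 - m) ^ t = 1 - (1 - m) ^ n := by
  linear_combination -geom_sum_mul (1 - m) n

noncomputable def geomUpper (P : ℕ) (x : ℝ) : Matrix (Fin P) (Fin P) ℝ :=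
  Matrix.of fun i j => if (i : ℕ) < (j : ℕ) then x ^ ((j : ℕ) - (i : ℕ) - 1) else 0

theorem Mbar_eq_smul (P : ℕ) (m : ℝ) : Mbar P m = m • Mbar P 1 := by
  ext i j
  simp [Mbar]

theorem Mbar_mul_geomUpper (P : ℕ) (m : ℝ) :
    Mbar P m * geomUpper P (1 - m) = Mbar P 1 - geomUpper P (1 - m) := by
  ext i k
  have hsum := Fin.sum_ite_Ico_pow_reflect (a := (i : ℕ) + 1) k.isLt.le (1 - m)
  have hterm : ∀ j : Fin P, Mbar P m i j * geomUpper P (1 - m) j k =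
      m * if (i : ℕ) + 1 ≤ j ∧ (j : ℕ) < k then (1 - m) ^ ((k : ℕ) - j - 1) else 0 := by
    intro j
    simp only [Mbar, geomUpper, of_apply]
    split_ifs <;> first | omega | ring
  rw [mul_apply, Finset.sum_congr rfl fun j _ => hterm j, ← Finset.mul_sum, hsum,
    mul_geom_sum_one_sub]
  simp only [Matrix.sub_apply, Mbar, geomUpper, of_apply]
  split_ifs with hik
  · rw [Nat.sub_sub]
  · rw [show (k : ℕ) - (i + 1) = 0 by omega]; simp

theorem inv_one_add_Mbar (P : ℕ) (m : ℝ) :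
    (1 + Mbar P m)⁻¹ = 1 - m • geomUpper P (1 - m) := by
  refine inv_eq_right_inv ?_
  rw [add_mul, one_mul, mul_sub, mul_one, mul_smul_comm, Mbar_mul_geomUpper, Mbar_eq_smul P m]
  module

theorem sum_one_sub_smul_geomUpper_col (P : ℕ) (m : ℝ) (k : Fin P) :
    ∑ j, (1 - m • geomUpper P (1 - m)) j k = (1 - m) ^ (k : ℕ) := by
  have hsum := Fin.sum_ite_Ico_pow_reflect (a := 0) k.isLt.le (1 - m)
  simp only [Nat.zero_le, true_and, Nat.sub_zero] at hsum
  simp only [Matrix.sub_apply, Matrix.smul_apply, smul_eq_mul, Finset.sum_sub_distrib,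
    ← Finset.mul_sum, geomUpper, of_apply, hsum, mul_geom_sum_one_sub, one_apply,
    Finset.sum_ite_eq', Finset.mem_univ, if_true, sub_sub_cancel]

theorem Cout_mul_apply (P : ℕ) (ρo : ℝ) (A : Matrix (Fin P) (Fin P) ℝ) (i k : Fin P) :
    (Cout P ρo * A) i k = ρo * ∑ j, A j k + (1 - ρo) * A i k := by
  rw [Cout, add_mul, smul_mul, one_mul, Matrix.add_apply, Matrix.smul_apply, mul_apply,
    Finset.mul_sum, smul_eq_mul]
  simp only [of_apply]

/-- Indices are zero-based: the paper's exponent `j - 1` is `(j : ℕ)` here. -/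
theorem Cout_mul_inv_entry_general
    (P : ℕ) (m : ℝ) (ρo : ℝ) :
    ∀ i j : Fin P,
      ((Cout P ρo * (1 + Mbar P m)⁻¹ : Matrix (Fin P) (Fin P) ℝ)) i j =
        ρo * (1 - m) ^ (j : ℕ)
          + (1 - ρo) * (if i = j then (1 : ℝ) else 0)
          - (1 - ρo) * m * (if (i : ℕ) < (j : ℕ) then (1 : ℝ) else 0) *
            (1 - m) ^ ((j : ℕ) - (i : ℕ) - 1) := by
  intro i j
  rw [inv_one_add_Mbar, Cout_mul_apply, sum_one_sub_smul_geomUpper_col]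
  simp only [Matrix.sub_apply, Matrix.smul_apply, one_apply, geomUpper, of_apply, smul_eq_mul]
  split_ifs <;> ring

/-- Entrywise formula for `C^out (I + M̄)⁻¹`:
`[C^out (I + M̄)⁻¹]_{ij} = ρₒ (1-m)^{j-1} + (1-ρₒ) δ_{ij} - (1-ρₒ) m [j > i] (1-m)^{j-i-1}`
(indices are one-based in the informal statement; here `i, j : Fin P` are zero-based,
so e.g. the one-based exponent `j - 1` is `(j : ℕ)`). -/
theorem Cout_mul_inv_entry
    (P : ℕ) (hP : 1 ≤ P) (m : ℝ) (hm : -1 < m) (hm' : m < 1) (ρo : ℝ) :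
    ∀ i j : Fin P,
      ((Cout P ρo * (1 + Mbar P m)⁻¹ : Matrix (Fin P) (Fin P) ℝ)) i j =
        ρo * (1 - m) ^ (j : ℕ)
          + (1 - ρo) * (if i = j then (1 : ℝ) else 0)
          - (1 - ρo) * m * (if (i : ℕ) < (j : ℕ) then (1 : ℝ) else 0) *
            (1 - m) ^ ((j : ℕ) - (i : ℕ) - 1) :=
  Cout_mul_inv_entry_general P m ρo
end

section
/- Let P ≥ 1 be an integer, m ∈ (-1,1) and ρₒ ∈ ℝ. Define v_{ji} = m(1-m)^{P-j} - m·[j ≤ i]·(1-m)^{i-j} and u_{jk} = ρₒ(1-m)^{k-1} - (1-ρₒ)m·[k > j]·(1-m)^{k-j-1} for indices in 1,…,P, where [·] denotes the 0/1 indicator. Then for all 1 ≤ i, k ≤ P, with j_{ik} := min(k-1, i), one has Σ_{j=1}^{P} v_{ji} u_{jk} = (ρₒ - (1-ρₒ)m/(2-m))·((1-m)^{i+k-1} - (1-m)^{P+k-1}) + ((1-ρₒ)m/(2-m))·((1-m)^{i+k-1-2j_{ik}} - (1-m)^{P-(k-1)}). -/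
open BigOperators

/-- `v_{ji} = m (1-m)^{P-j} - m [j ≤ i] (1-m)^{i-j}` (one-based indices). -/
noncomputable def vfun (P : ℕ) (m : ℝ) (j i : ℕ) : ℝ :=
  m * (1 - m) ^ (P - j) - m * (if j ≤ i then (1 : ℝ) else 0) * (1 - m) ^ (i - j)

/-- `u_{jk} = ρₒ (1-m)^{k-1} - (1-ρₒ) m [k > j] (1-m)^{k-j-1}` (one-based indices). -/
noncomputable def ufun (m ρo : ℝ) (j k : ℕ) : ℝ :=
  ρo * (1 - m) ^ (k - 1)
    - (1 - ρo) * m * (if j < k then (1 : ℝ) else 0) * (1 - m) ^ (k - j - 1)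

open Finset

/-!
Expanding the product, the sum splits into four geometric sums: over `j ≤ P` and `j ≤ i` with
ratio `1 - m`, and over `j ≤ k - 1` and `j ≤ min (k - 1) i` with ratio `(1 - m)²`. Their closed
forms combine to the stated expression because `1 - (1 - m)² = m (2 - m)`.
-/

theorem sum_Icc_one_ite_le {M : Type*} [AddCommMonoid M] {n P : ℕ} (h : n ≤ P) (f : ℕ → M) :
    ∑ j ∈ Icc 1 P, (if j ≤ n then f j else 0) = ∑ j ∈ Icc 1 n, f j := by
  rw [← sum_filter]
  congr 1
  ext j
  simp only [mem_filter, mem_Icc]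
  omega

section Geometric

variable {R : Type*} [CommRing R]

theorem one_sub_mul_mul_sum_Icc_pow_mul_pow (x y : R) {a b n : ℕ} (ha : n ≤ a) (hb : n ≤ b) :
    (1 - x * y) * ∑ j ∈ Icc 1 n, x ^ (a - j) * y ^ (b - j) =
      x ^ (a - n) * y ^ (b - n) - x ^ a * y ^ b := by
  induction n with
  | zero => simp
  | succ n ih =>
    obtain ⟨a, rfl⟩ : ∃ a', a = a' + (n + 1) := ⟨a - (n + 1), by omega⟩
    obtain ⟨b, rfl⟩ : ∃ b', b = b' + (n + 1) := ⟨b - (n + 1), by omega⟩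
    rw [sum_Icc_succ_top (by omega), mul_add, ih (by omega) (by omega)]
    simp only [Nat.add_sub_cancel, show a + (n + 1) - n = a + 1 by omega,
      show b + (n + 1) - n = b + 1 by omega]
    ring

theorem one_sub_mul_sum_Icc_pow (x : R) (n : ℕ) :
    (1 - x) * ∑ j ∈ Icc 1 n, x ^ (n - j) = 1 - x ^ n := by
  simpa using one_sub_mul_mul_sum_Icc_pow_mul_pow x 1 (le_refl n) (le_refl n)

end Geometric

theorem vfun_mul_ufun (P : ℕ) (m ρo : ℝ) {i j k : ℕ} (hj : 1 ≤ j) :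
    vfun P m j i * ufun m ρo j k =
      m * ρo * (1 - m) ^ (k - 1) * (1 - m) ^ (P - j)
        - m ^ 2 * (1 - ρo) * (if j ≤ k - 1 then (1 - m) ^ (P - j) * (1 - m) ^ (k - 1 - j) else 0)
        - m * ρo * (1 - m) ^ (k - 1) * (if j ≤ i then (1 - m) ^ (i - j) else 0)
        + m ^ 2 * (1 - ρo) *
          (if j ≤ min (k - 1) i then (1 - m) ^ (i - j) * (1 - m) ^ (k - 1 - j) else 0) := by
  have hlt : j < k ↔ j ≤ k - 1 := by omega
  simp only [vfun, ufun, hlt, Nat.sub_right_comm k j 1]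
  by_cases hi : j ≤ i <;> by_cases hk : j ≤ k - 1 <;>
    simp only [hi, hk, le_min_iff, and_self, and_true, and_false, ↓reduceIte] <;> ring

theorem sum_v_mul_u_general
    (P : ℕ) (m : ℝ) (hm' : m < 1) (ρo : ℝ) :
    ∀ i k : ℕ, 1 ≤ i → i ≤ P → 1 ≤ k → k ≤ P →
      ∑ j ∈ Finset.Icc 1 P, vfun P m j i * ufun m ρo j k =
        (ρo - (1 - ρo) * m / (2 - m)) *
            ((1 - m) ^ (i + k - 1) - (1 - m) ^ (P + k - 1))
          + ((1 - ρo) * m / (2 - m)) *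
            ((1 - m) ^ (i + k - 1 - 2 * min (k - 1) i) - (1 - m) ^ (P - (k - 1))) := by
  intro i k _ hiP _ hkP
  set q := 1 - m
  set J := min (k - 1) i
  rw [sum_congr rfl fun j hj => vfun_mul_ufun P m ρo (mem_Icc.1 hj).1, sum_add_distrib,
    sum_sub_distrib, sum_sub_distrib, ← mul_sum, ← mul_sum, ← mul_sum, ← mul_sum,
    sum_Icc_one_ite_le (by omega), sum_Icc_one_ite_le hiP, sum_Icc_one_ite_le (by omega)]
  have geom_P := one_sub_mul_sum_Icc_pow q P
  have geom_i := one_sub_mul_sum_Icc_pow q i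
  have geom_k := one_sub_mul_mul_sum_Icc_pow_mul_pow q q (show k - 1 ≤ P by omega) le_rfl
  have geom_J := one_sub_mul_mul_sum_Icc_pow_mul_pow q q (min_le_right (k - 1) i) (min_le_left _ _)
  have pow_ik : q ^ (i + k - 1) = q ^ i * q ^ (k - 1) := by rw [← pow_add]; congr 1; omega
  have pow_Pk : q ^ (P + k - 1) = q ^ P * q ^ (k - 1) := by rw [← pow_add]; congr 1; omega
  have pow_J : q ^ (i + k - 1 - 2 * J) = q ^ (i - J) * q ^ (k - 1 - J) := by
    rw [← pow_add]; congr 1; omega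
  rw [pow_ik, pow_Pk, pow_J]
  simp only [Nat.sub_self, pow_zero, mul_one] at geom_k
  have hc : (1 - ρo) * m / (2 - m) * (2 - m) = (1 - ρo) * m :=
    div_mul_cancel₀ _ (by linarith)
  linear_combination ρo * q ^ (k - 1) * (geom_P - geom_i) - (1 - ρo) * m / (2 - m) * (geom_k - geom_J)
    - m * (∑ j ∈ Icc 1 J, q ^ (i - j) * q ^ (k - 1 - j)
      - ∑ j ∈ Icc 1 (k - 1), q ^ (P - j) * q ^ (k - 1 - j)) * hc

/-- Closed form of `Σ_{j=1}^P v_{ji} u_{jk}`, an intermediate identity in the proof of the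
paper's linear-perturbation theorem. -/
theorem sum_v_mul_u
    (P : ℕ) (hP : 1 ≤ P) (m : ℝ) (hm : -1 < m) (hm' : m < 1) (ρo : ℝ) :
    ∀ i k : ℕ, 1 ≤ i → i ≤ P → 1 ≤ k → k ≤ P →
      ∑ j ∈ Finset.Icc 1 P, vfun P m j i * ufun m ρo j k =
        (ρo - (1 - ρo) * m / (2 - m)) *
            ((1 - m) ^ (i + k - 1) - (1 - m) ^ (P + k - 1))
          + ((1 - ρo) * m / (2 - m)) *
            ((1 - m) ^ (i + k - 1 - 2 * min (k - 1) i) - (1 - m) ^ (P - (k - 1))) :=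
  sum_v_mul_u_general P m hm' ρo
end

section
/- Let P ≥ 1 be an integer and m ∈ (-1,1). Define v_{ji} = m(1-m)^{P-j} - m·[j ≤ i]·(1-m)^{i-j} for indices in 1,…,P, where [·] denotes the 0/1 indicator. Then for all 1 ≤ k ≤ l ≤ P, Σ_{i=1}^{P} v_{li} v_{ki} = (Pm² + 2m(1-m) - m(1-m)²/(2-m))·(1-m)^{2P-(k+l)} - m((1-m)^{P-k} + (1-m)^{P-l}) + (m/(2-m))·(1-m)^{l-k}. -/
/-!
Write `a = 1 - m`. For `k ≤ l ≤ P` the product `v_{li} v_{ki}` is a constant `m² a^{2P-k-l}` minus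
two terms supported on `i ≥ k` and `i ≥ l` plus one supported on `i ≥ l`, geometric in `a` or
`a²` along `i`. Summing over `i` leaves three geometric sums, evaluated through
`(1 - x) ∑_{n<N} x^n = 1 - x^N` with `1 - a = m` and `1 - a² = m (2 - m)`; only the last needs a
division, by `2 - m`.
-/

open BigOperators

open Finset

theorem pow_eq_pow_mul_pow {M : Type*} [Monoid M] (a : M) {n p q : ℕ} (h : n = p + q) :
    a ^ n = a ^ p * a ^ q := by
  rw [h, pow_add]

theorem sum_Icc_ite_le {M : Type*} [AddCommMonoid M] (f : ℕ → M) {j : ℕ} (hj : 1 ≤ j) (P : ℕ) :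
    ∑ i ∈ Icc 1 P, (if j ≤ i then f (i - j) else 0) = ∑ n ∈ range (P + 1 - j), f n := by
  have hfilter : (Icc 1 P).filter (j ≤ ·) = Ico j (P + 1) := by
    ext i
    simp only [mem_filter, mem_Icc, mem_Ico]
    omega
  rw [← sum_filter, hfilter, sum_Ico_eq_sum_range]
  simp

theorem mul_geom_sum_one_sub_sq {m : ℝ} (hm : m ≠ 2) (N : ℕ) :
    m * ∑ n ∈ range N, ((1 - m) ^ 2) ^ n = (1 - ((1 - m) ^ 2) ^ N) / (2 - m) := by
  rw [eq_div_iff (sub_ne_zero.2 hm.symm)]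
  linear_combination mul_neg_geom_sum ((1 - m) ^ 2) N

section

variable {P k l : ℕ} (m : ℝ)

theorem vfun_mul_vfun (hkl : k ≤ l) (hlP : l ≤ P) (i : ℕ) :
    vfun P m l i * vfun P m k i =
      m ^ 2 * (1 - m) ^ (2 * P - (k + l))
        - m ^ 2 * (1 - m) ^ (P - l) * (if k ≤ i then (1 - m) ^ (i - k) else 0)
        - m ^ 2 * (1 - m) ^ (P - k) * (if l ≤ i then (1 - m) ^ (i - l) else 0)
        + m ^ 2 * (1 - m) ^ (l - k) * (if l ≤ i then ((1 - m) ^ 2) ^ (i - l) else 0) := by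
  unfold vfun
  rw [pow_eq_pow_mul_pow (1 - m) (show 2 * P - (k + l) = (P - l) + (P - k) by omega),
    pow_eq_pow_mul_pow (1 - m) (show P - k = (P - l) + (l - k) by omega)]
  by_cases hli : l ≤ i
  · rw [pow_eq_pow_mul_pow (1 - m) (show i - k = (i - l) + (l - k) by omega)]
    simp only [hli, hkl.trans hli, if_true, ← pow_mul]
    ring
  · split_ifs <;> ring

theorem sum_vfun_mul_vfun (hk : 1 ≤ k) (hkl : k ≤ l) (hlP : l ≤ P) :
    ∑ i ∈ Icc 1 P, vfun P m l i * vfun P m k i =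
      P * m ^ 2 * (1 - m) ^ (2 * P - (k + l))
        - m ^ 2 * (1 - m) ^ (P - l) * ∑ n ∈ range (P + 1 - k), (1 - m) ^ n
        - m ^ 2 * (1 - m) ^ (P - k) * ∑ n ∈ range (P + 1 - l), (1 - m) ^ n
        + m ^ 2 * (1 - m) ^ (l - k) * ∑ n ∈ range (P + 1 - l), ((1 - m) ^ 2) ^ n := by
  simp only [vfun_mul_vfun m hkl hlP, sum_add_distrib, sum_sub_distrib, ← mul_sum, sum_const,
    Nat.card_Icc, sum_Icc_ite_le (fun n ↦ (1 - m) ^ n) hk,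
    sum_Icc_ite_le (fun n ↦ (1 - m) ^ n) (hk.trans hkl),
    sum_Icc_ite_le (fun n ↦ ((1 - m) ^ 2) ^ n) (hk.trans hkl), Nat.add_sub_cancel, nsmul_eq_mul]
  ring

end

theorem sum_v_mul_v_general
    (P : ℕ) (m : ℝ) (hm' : m < 1) :
    ∀ k l : ℕ, 1 ≤ k → k ≤ l → l ≤ P →
      ∑ i ∈ Finset.Icc 1 P, vfun P m l i * vfun P m k i =
        ((P : ℝ) * m ^ 2 + 2 * m * (1 - m) - m * (1 - m) ^ 2 / (2 - m)) *
            (1 - m) ^ (2 * P - (k + l))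
          - m * ((1 - m) ^ (P - k) + (1 - m) ^ (P - l))
          + (m / (2 - m)) * (1 - m) ^ (l - k) := by
  intro k l hk hkl hlP
  rw [sum_vfun_mul_vfun m hk hkl hlP]
  set s := (1 - m) ^ (P - l)
  set t := (1 - m) ^ (l - k)
  have hPk : (1 - m) ^ (P - k) = s * t := pow_eq_pow_mul_pow _ (by omega)
  have h2P : (1 - m) ^ (2 * P - (k + l)) = s * s * t := by
    rw [pow_eq_pow_mul_pow _ (show _ = (P - l) + (P - k) by omega), hPk, mul_assoc]
  have hA := mul_neg_geom_sum (1 - m) (P + 1 - k)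
  have hB := mul_neg_geom_sum (1 - m) (P + 1 - l)
  have hC := mul_geom_sum_one_sub_sq (show m ≠ 2 by linarith) (P + 1 - l)
  rw [pow_eq_pow_mul_pow _ (show P + 1 - k = 1 + ((P - l) + (l - k)) by omega), pow_add] at hA
  rw [pow_eq_pow_mul_pow _ (show P + 1 - l = 1 + (P - l) by omega)] at hB
  rw [pow_eq_pow_mul_pow _ (show P + 1 - l = 1 + (P - l) by omega), ← pow_mul, ← pow_mul] at hC
  rw [hPk, h2P]
  linear_combination (-m * s) * hA + (-m * s * t) * hB + (m * t) * hC

/-- Closed form of `Σ_{i=1}^P v_{li} v_{ki}` for `1 ≤ k ≤ l ≤ P`, an intermediate identity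
in the proof of the paper's linear-perturbation theorem. -/
theorem sum_v_mul_v
    (P : ℕ) (hP : 1 ≤ P) (m : ℝ) (hm : -1 < m) (hm' : m < 1) :
    ∀ k l : ℕ, 1 ≤ k → k ≤ l → l ≤ P →
      ∑ i ∈ Finset.Icc 1 P, vfun P m l i * vfun P m k i =
        ((P : ℝ) * m ^ 2 + 2 * m * (1 - m) - m * (1 - m) ^ 2 / (2 - m)) *
            (1 - m) ^ (2 * P - (k + l))
          - m * ((1 - m) ^ (P - k) + (1 - m) ^ (P - l))
          + (m / (2 - m)) * (1 - m) ^ (l - k) :=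
  sum_v_mul_v_general P m hm'
end

section
/- Let P ≥ 1 be an integer and m ∈ (-1,1) with m ≠ 0 or arbitrary m ∈ (-1,1). Define G⁺_{μν} = -(1-m)^{P+μ-1} - (1-m)^{P+ν-1} + ((3-m)/(2-m))(1-m)^{μ+ν-1} and α⁺ = ((2-m)/(3-m))(1-m)^P. Then for all 1 ≤ μ, ν ≤ P the identity G⁺_{μν} = ((3-m)/((2-m)(1-m)))·((1-m)^μ - α⁺)·((1-m)^ν - α⁺) - α⁺(1-m)^{P-1} holds. -/
/-- Absolute-position coefficient
`G⁺_{μν} = -(1-m)^{P+μ-1} - (1-m)^{P+ν-1} + ((3-m)/(2-m))(1-m)^{μ+ν-1}`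
(one-based indices). -/
noncomputable def Gplus (P : ℕ) (m : ℝ) (μ ν : ℕ) : ℝ :=
  -(1 - m) ^ (P + μ - 1) - (1 - m) ^ (P + ν - 1)
    + ((3 - m) / (2 - m)) * (1 - m) ^ (μ + ν - 1)

/-!
With `x = 1 - m`, `c = (3-m)/(2-m)` and `α = x^P / c`, expanding `(c/x)(x^μ - α)(x^ν - α)` gives
`c x^{μ+ν-1} - x^{P+μ-1} - x^{P+ν-1} + α x^{P-1}`, since `c α = x^P`; subtracting `α x^{P-1}`
leaves `G⁺`. With integer exponents this is an identity of Laurent polynomials, free of the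
truncated subtraction in the natural-number exponents of `Gplus`.
-/

theorem neg_zpow_sub_zpow_add_mul_zpow_eq {K : Type*} [Field K] {x c α : K} {p : ℤ}
    (hx : x ≠ 0) (hα : c * α = x ^ p) (μ ν : ℤ) :
    -x ^ (p + μ - 1) - x ^ (p + ν - 1) + c * x ^ (μ + ν - 1) =
      c / x * (x ^ μ - α) * (x ^ ν - α) - α * x ^ (p - 1) := by
  simp only [zpow_sub_one₀ hx, zpow_add₀ hx, ← hα]
  field_simp
  ring

theorem Gplus_factorized_general
    (P : ℕ) (hP : 1 ≤ P) (m : ℝ) (hm' : m < 1) :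
    ∀ μ ν : ℕ, 1 ≤ μ → μ ≤ P → 1 ≤ ν → ν ≤ P →
      Gplus P m μ ν =
        ((3 - m) / ((2 - m) * (1 - m))) *
            ((1 - m) ^ μ - ((2 - m) / (3 - m)) * (1 - m) ^ P) *
            ((1 - m) ^ ν - ((2 - m) / (3 - m)) * (1 - m) ^ P)
          - (((2 - m) / (3 - m)) * (1 - m) ^ P) * (1 - m) ^ (P - 1) := by
  intro μ ν hμ _ hν _
  have hx : (1 : ℝ) - m ≠ 0 := by linarith
  have hα : (3 - m) / (2 - m) * ((2 - m) / (3 - m) * (1 - m) ^ P) = (1 - m) ^ (P : ℤ) := by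
    rw [zpow_natCast]
    field_simp [show (3 : ℝ) - m ≠ 0 by linarith, show (2 : ℝ) - m ≠ 0 by linarith]
  have hzpow := neg_zpow_sub_zpow_add_mul_zpow_eq hx hα μ ν
  rw [div_div] at hzpow
  simp only [← zpow_natCast, Gplus, Nat.cast_sub (by omega : 1 ≤ P + μ),
    Nat.cast_sub (by omega : 1 ≤ P + ν), Nat.cast_sub (by omega : 1 ≤ μ + ν), Nat.cast_sub hP,
    Nat.cast_add, Nat.cast_one, hzpow]

/-- Factorized form of `G⁺` with `α⁺ = ((2-m)/(3-m))(1-m)^P`. -/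
theorem Gplus_factorized
    (P : ℕ) (hP : 1 ≤ P) (m : ℝ) (hm : -1 < m) (hm' : m < 1) :
    ∀ μ ν : ℕ, 1 ≤ μ → μ ≤ P → 1 ≤ ν → ν ≤ P →
      Gplus P m μ ν =
        ((3 - m) / ((2 - m) * (1 - m))) *
            ((1 - m) ^ μ - ((2 - m) / (3 - m)) * (1 - m) ^ P) *
            ((1 - m) ^ ν - ((2 - m) / (3 - m)) * (1 - m) ^ P)
          - (((2 - m) / (3 - m)) * (1 - m) ^ P) * (1 - m) ^ (P - 1) :=
  Gplus_factorized_general P hP m hm'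
end

section
/- Let P ≥ 1 be an integer and m a real number with 0 < m < 1. Define G⁺_{μν} = -(1-m)^{P+μ-1} - (1-m)^{P+ν-1} + ((3-m)/(2-m))(1-m)^{μ+ν-1} for 1 ≤ μ, ν ≤ P. Then G⁺ is strictly decreasing in each index: for all 1 ≤ μ < μ' ≤ P and 1 ≤ ν ≤ P one has G⁺_{μ'ν} < G⁺_{μν}, and for all 1 ≤ μ ≤ P and 1 ≤ ν < ν' ≤ P one has G⁺_{μν'} < G⁺_{μν}. -/
/-! With `q = 1 - m` and `c = (3 - m)/(2 - m)`, the difference of two values of `G⁺` in the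
same row factors as `(q^(μ'-1) - q^(μ-1)) * (c q^ν - q^P)`. For `0 < m < 1` the first factor is
negative when `μ < μ'`, and the second is positive because `q^P ≤ q^ν < c q^ν` for `ν ≤ P`.
Monotonicity in the second index follows by the symmetry of `G⁺`. -/

theorem Gplus_comm (P : ℕ) (m : ℝ) (μ ν : ℕ) : Gplus P m μ ν = Gplus P m ν μ := by
  unfold Gplus
  rw [Nat.add_comm μ ν]
  ring

theorem Gplus_sub_Gplus_left (P : ℕ) (m : ℝ) {μ μ' : ℕ} (hμ : 1 ≤ μ) (hμ' : 1 ≤ μ') (ν : ℕ) :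
    Gplus P m μ' ν - Gplus P m μ ν =
      ((1 - m) ^ (μ' - 1) - (1 - m) ^ (μ - 1)) *
        ((3 - m) / (2 - m) * (1 - m) ^ ν - (1 - m) ^ P) := by
  obtain ⟨a, rfl⟩ := Nat.exists_eq_add_of_le' hμ
  obtain ⟨a', rfl⟩ := Nat.exists_eq_add_of_le' hμ'
  simp only [Gplus, Nat.add_sub_cancel, ← Nat.add_assoc, Nat.add_right_comm _ 1 ν, pow_add]
  ring

theorem one_lt_three_sub_div_two_sub {m : ℝ} (hm : m < 2) : 1 < (3 - m) / (2 - m) :=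
  (one_lt_div (by linarith)).2 (by linarith)

theorem pow_lt_mul_pow_of_le {q c : ℝ} (hq : 0 < q) (hq' : q ≤ 1) (hc : 1 < c) {ν P : ℕ}
    (hνP : ν ≤ P) : q ^ P < c * q ^ ν :=
  calc q ^ P ≤ q ^ ν := pow_le_pow_of_le_one hq.le hq' hνP
    _ < c * q ^ ν := lt_mul_left (pow_pos hq ν) hc

theorem Gplus_lt_Gplus_left {P : ℕ} {m : ℝ} (hm : 0 < m) (hm' : m < 1) {μ μ' ν : ℕ}
    (hμ : 1 ≤ μ) (hμμ' : μ < μ') (hνP : ν ≤ P) : Gplus P m μ' ν < Gplus P m μ ν := by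
  have hq : 0 < 1 - m := by linarith
  have hrow : (1 - m) ^ (μ' - 1) < (1 - m) ^ (μ - 1) :=
    pow_lt_pow_right_of_lt_one₀ hq (by linarith) (by omega)
  have hcol : (1 - m) ^ P < (3 - m) / (2 - m) * (1 - m) ^ ν :=
    pow_lt_mul_pow_of_le hq (by linarith) (one_lt_three_sub_div_two_sub (by linarith)) hνP
  rw [← sub_neg, Gplus_sub_Gplus_left P m hμ (by omega)]
  exact mul_neg_of_neg_of_pos (sub_neg.2 hrow) (sub_pos.2 hcol)

theorem Gplus_strict_anti_general
    (P : ℕ) (m : ℝ) (hm : 0 < m) (hm' : m < 1) :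
    (∀ μ μ' ν : ℕ, 1 ≤ μ → μ < μ' → μ' ≤ P → 1 ≤ ν → ν ≤ P →
      Gplus P m μ' ν < Gplus P m μ ν) ∧
    (∀ μ ν ν' : ℕ, 1 ≤ μ → μ ≤ P → 1 ≤ ν → ν < ν' → ν' ≤ P →
      Gplus P m μ ν' < Gplus P m μ ν) := by
  refine ⟨fun μ μ' ν hμ hμμ' _ _ hνP => Gplus_lt_Gplus_left hm hm' hμ hμμ' hνP,
    fun μ ν ν' _ hμP hν hνν' _ => ?_⟩
  rw [Gplus_comm P m μ ν', Gplus_comm P m μ ν]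
  exact Gplus_lt_Gplus_left hm hm' hν hνν' hμP

/-- For `0 < m < 1`, `G⁺` is strictly decreasing in each of its two indices
(the basis of the paper's periphery-to-core rule). -/
theorem Gplus_strict_anti
    (P : ℕ) (hP : 1 ≤ P) (m : ℝ) (hm : 0 < m) (hm' : m < 1) :
    (∀ μ μ' ν : ℕ, 1 ≤ μ → μ < μ' → μ' ≤ P → 1 ≤ ν → ν ≤ P →
      Gplus P m μ' ν < Gplus P m μ ν) ∧
    (∀ μ ν ν' : ℕ, 1 ≤ μ → μ ≤ P → 1 ≤ ν → ν < ν' → ν' ≤ P →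
      Gplus P m μ ν' < Gplus P m μ ν) :=
  Gplus_strict_anti_general P m hm hm'
end
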